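/- Let X be a metric space, λ ≥ 0, ℓ : X → [0,∞) lsc with inf_X ℓ = 0, and u : X → ℝ with inf_X u = 0. Then T^∞ u(x) = sup { v(x) : v is a subsolution of λ w + G[w] = ℓ with inf_X v = 0, and v ≤ u }, for every x ∈ X. -/

import Mathlib

open Filter Topology ENNReal

/-!
`T` is monotone, satisfies `T v ≤ v` (take `y = x`) and commutes with infima, so
`w = ⨅ₙ Tⁿ u` is a fixed point of `T` below `u`, with `inf w = 0`. Multiplying out, `v ≤ T v`
says `v x (1 + λ d) ≤ v y + ℓ x d` for all `x, y`; for `y ≠ x` this is the subsolution inequality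
`λ v x + (v x - v y) / d ≤ ℓ x` multiplied by `d`. The way back from the fixed-point form also
needs `λ v ≤ ℓ`: where it fails, the inequality forces `v x ≤ v y` for every `y`, so `v x = inf v = 0`.
Hence `w` is a subsolution, and every subsolution `v ≤ u` satisfies `v ≤ T v`, hence `v ≤ Tⁿ u`.
-/

/-- The global slope of a nonnegative extended-real valued function `u : X → [0, ∞]`:
`G[u](x) = sup_{y ≠ x} (u x - u y)⁺ / d(x,y)` when `u x < ∞` (truncated subtraction in
`ℝ≥0∞` is exactly the positive part), and `∞` when `u x = ∞`. -/
noncomputable def gslopeN {X : Type*} [MetricSpace X] (u : X → ℝ≥0∞) (x : X) : ℝ≥0∞ :=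
  if u x = ⊤ then ⊤
  else ⨆ (y : X) (_ : y ≠ x), (u x - u y) / edist x y

/-- The operator `T u (x) = inf_y (u y + ℓ x · d(x,y)) / (1 + λ · d(x,y))` acting on
nonnegative extended-real valued functions. -/
noncomputable def TopE {X : Type*} [MetricSpace X] (lam : ℝ) (ℓ : X → ℝ)
    (u : X → ℝ≥0∞) (x : X) : ℝ≥0∞ :=
  ⨅ y : X, (u y + ENNReal.ofReal (ℓ x) * edist x y) / (1 + ENNReal.ofReal lam * edist x y)

namespace ENNReal

theorem mul_one_add_mul_le_of_mul_add_div_le {a b c d l : ℝ≥0∞} (hd₀ : d ≠ 0) (hd : d ≠ ∞)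
    (h : c * a + (a - b) / d ≤ l) : a * (1 + c * d) ≤ b + l * d :=
  calc a * (1 + c * d) = a + c * a * d := by ring
    _ ≤ b + (a - b) + c * a * d := by gcongr; exact le_add_tsub
    _ = b + (c * a + (a - b) / d) * d := by
        rw [add_mul, ENNReal.div_mul_cancel hd₀ hd]; ring
    _ ≤ b + l * d := by gcongr

theorem sub_div_le_tsub_of_mul_one_add_mul_le {a b c d l : ℝ≥0∞} (hd₀ : d ≠ 0) (hd : d ≠ ∞)
    (hca : c * a ≠ ∞) (h : a * (1 + c * d) ≤ b + l * d) : (a - b) / d ≤ l - c * a := by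
  rw [ENNReal.div_le_iff hd₀ hd, ENNReal.sub_mul fun _ _ => hd, tsub_le_iff_right]
  refine ENNReal.le_of_add_le_add_right (mul_ne_top hca hd) ?_
  calc a + c * a * d = a * (1 + c * d) := by ring
    _ ≤ b + l * d := h
    _ ≤ b + (l * d - c * a * d + c * a * d) := by gcongr; exact le_tsub_add
    _ = l * d - c * a * d + b + c * a * d := by ring

end ENNReal

section

variable {X : Type*} [MetricSpace X] (lam : ℝ) (ℓ : X → ℝ)

def IsSubsolution (v : X → ℝ≥0∞) : Prop :=
  ∀ x, ENNReal.ofReal lam * v x + gslopeN v x ≤ ENNReal.ofReal (ℓ x)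

theorem one_add_ofReal_mul_edist_ne_top (x y : X) : 1 + ENNReal.ofReal lam * edist x y ≠ ∞ :=
  add_ne_top.2 ⟨one_ne_top, mul_ne_top ofReal_ne_top (edist_ne_top x y)⟩

theorem TopE_mono : Monotone (TopE lam ℓ) := fun _ _ h _ =>
  iInf_mono fun y => ENNReal.div_le_div_right (add_le_add_left (h y) _) _

theorem TopE_le_self (v : X → ℝ≥0∞) : TopE lam ℓ v ≤ v := fun x =>
  (iInf_le _ x).trans (by simp)

theorem TopE_iInf {ι : Sort*} (f : ι → X → ℝ≥0∞) :
    TopE lam ℓ (⨅ i, f i) = ⨅ i, TopE lam ℓ (f i) := by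
  ext x
  simp only [TopE, iInf_apply, ENNReal.iInf_add,
    ENNReal.iInf_div_of_ne (by simp) (one_add_ofReal_mul_edist_ne_top lam _ _)]
  exact iInf_comm

theorem TopE_iInf_iterate (u : X → ℝ≥0∞) :
    TopE lam ℓ (⨅ n, (TopE lam ℓ)^[n] u) = ⨅ n, (TopE lam ℓ)^[n] u := by
  have hanti : Antitone fun n => (TopE lam ℓ)^[n] u := fun _ _ hmn =>
    Function.antitone_iterate_of_le_id (TopE_le_self lam ℓ) hmn u
  simp only [TopE_iInf, ← Function.iterate_succ_apply' (TopE lam ℓ)]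
  exact hanti.iInf_nat_add 1

theorem le_TopE_iff {v : X → ℝ≥0∞} : v ≤ TopE lam ℓ v ↔ ∀ x y,
    v x * (1 + ENNReal.ofReal lam * edist x y) ≤ v y + ENNReal.ofReal (ℓ x) * edist x y := by
  simp only [Pi.le_def, TopE, le_iInf_iff]
  exact forall₂_congr fun x y =>
    ENNReal.le_div_iff_mul_le (by simp) (Or.inl (one_add_ofReal_mul_edist_ne_top lam x y))

namespace IsSubsolution

variable {lam ℓ} {v : X → ℝ≥0∞} (hv : IsSubsolution lam ℓ v)
include hv

theorem ne_top (x : X) : v x ≠ ∞ := by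
  intro h
  simpa [gslopeN, h] using hv x

theorem ofReal_mul_add_sub_div_le {x y : X} (hyx : y ≠ x) :
    ENNReal.ofReal lam * v x + (v x - v y) / edist x y ≤ ENNReal.ofReal (ℓ x) := by
  refine le_trans (add_le_add_right ?_ _) (hv x)
  rw [gslopeN, if_neg (hv.ne_top x)]
  exact le_iSup₂ (f := fun z (_ : z ≠ x) => (v x - v z) / edist x z) y hyx

theorem le_TopE : v ≤ TopE lam ℓ v := by
  refine (le_TopE_iff lam ℓ).2 fun x y => ?_
  rcases eq_or_ne y x with rfl | hyx
  · simp
  · exact mul_one_add_mul_le_of_mul_add_div_le (edist_pos.2 hyx.symm).ne' (edist_ne_top x y)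
      (hv.ofReal_mul_add_sub_div_le hyx)

theorem le_iterate_TopE {u : X → ℝ≥0∞} (hvu : v ≤ u) (n : ℕ) : v ≤ (TopE lam ℓ)^[n] u := by
  induction n with
  | zero => exact hvu
  | succ n ih =>
    rw [Function.iterate_succ_apply']
    exact hv.le_TopE.trans (TopE_mono lam ℓ ih)

end IsSubsolution

variable {lam ℓ} {v : X → ℝ≥0∞}

theorem ne_top_of_le_TopE (hv : v ≤ TopE lam ℓ v) {y : X} (hy : v y ≠ ∞) (x : X) : v x ≠ ∞ :=
  ne_top_of_le_ne_top (add_ne_top.2 ⟨hy, mul_ne_top ofReal_ne_top (edist_ne_top x y)⟩)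
    ((le_mul_of_one_le_right' le_self_add).trans ((le_TopE_iff lam ℓ).1 hv x y))

theorem ofReal_mul_le_of_le_TopE (hv : v ≤ TopE lam ℓ v) (hinf : ⨅ y, v y = 0)
    (hfin : ∀ y, v y ≠ ∞) (x : X) : ENNReal.ofReal lam * v x ≤ ENNReal.ofReal (ℓ x) := by
  by_contra! hlt
  suffices v x = 0 by simp [this] at hlt
  refine le_antisymm (hinf ▸ le_iInf fun y => ?_) bot_le
  have hcad : ENNReal.ofReal lam * v x * edist x y ≠ ∞ :=
    mul_ne_top (mul_ne_top ofReal_ne_top (hfin x)) (edist_ne_top x y)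
  refine ENNReal.le_of_add_le_add_right hcad ?_
  calc v x + ENNReal.ofReal lam * v x * edist x y
      = v x * (1 + ENNReal.ofReal lam * edist x y) := by ring
    _ ≤ v y + ENNReal.ofReal (ℓ x) * edist x y := (le_TopE_iff lam ℓ).1 hv x y
    _ ≤ v y + ENNReal.ofReal lam * v x * edist x y := by gcongr

theorem isSubsolution_of_le_TopE (hv : v ≤ TopE lam ℓ v) (hinf : ⨅ y, v y = 0) :
    IsSubsolution lam ℓ v := by
  obtain ⟨y, hy⟩ : ∃ y, v y < ∞ := iInf_lt_iff.1 (hinf ▸ ENNReal.zero_lt_top)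
  have hfin := ne_top_of_le_TopE hv hy.ne
  intro x
  have hca := ofReal_mul_le_of_le_TopE hv hinf hfin x
  rw [gslopeN, if_neg (hfin x)]
  calc ENNReal.ofReal lam * v x + ⨆ (z : X) (_ : z ≠ x), (v x - v z) / edist x z
      ≤ ENNReal.ofReal lam * v x + (ENNReal.ofReal (ℓ x) - ENNReal.ofReal lam * v x) := by
        refine add_le_add_right (iSup₂_le fun z hzx => ?_) _
        exact sub_div_le_tsub_of_mul_one_add_mul_le (edist_pos.2 hzx.symm).ne'
          (edist_ne_top x z) (mul_ne_top ofReal_ne_top (hfin x)) ((le_TopE_iff lam ℓ).1 hv x z)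
    _ = ENNReal.ofReal (ℓ x) := add_tsub_cancel_of_le hca

end

theorem iInf_iterates_eq_sup_subsolutions_general {X : Type*} [MetricSpace X]
    (lam : ℝ) (ℓ : X → ℝ) (u : X → ℝ≥0∞) (hinfu : ⨅ x, u x = 0) :
    ∀ x, (⨅ n : ℕ, (TopE lam ℓ)^[n] u x) =
      ⨆ (v : X → ℝ≥0∞) (_ : (⨅ y, v y = 0) ∧
          (∀ y, ENNReal.ofReal lam * v y + gslopeN v y ≤ ENNReal.ofReal (ℓ y)) ∧
          ∀ y, v y ≤ u y),
        v x := by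
  intro x
  set w := ⨅ n : ℕ, (TopE lam ℓ)^[n] u
  have hwu : w ≤ u := iInf_le _ 0
  have hw_inf : ⨅ y, w y = 0 := le_antisymm (hinfu ▸ iInf_mono hwu) bot_le
  have hw : IsSubsolution lam ℓ w :=
    isSubsolution_of_le_TopE (TopE_iInf_iterate lam ℓ u).ge hw_inf
  refine le_antisymm (le_iSup₂_of_le w ⟨hw_inf, hw, hwu⟩ iInf_apply.ge) (iSup₂_le ?_)
  rintro v ⟨-, hv, hvu⟩
  exact le_iInf fun n => IsSubsolution.le_iterate_TopE hv hvu n x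

/-- Perron-type characterization: `T^∞ u` (the pointwise nonincreasing limit of the iterates,
i.e. their pointwise infimum) equals, at every point, the supremum of all subsolutions of
`λ w + G[w] = ℓ` lying below `u`. -/
theorem iInf_iterates_eq_sup_subsolutions {X : Type*} [MetricSpace X] [Nonempty X]
    (lam : ℝ) (hlam : 0 ≤ lam)
    (ℓ : X → ℝ) (hℓ : LowerSemicontinuous ℓ) (hℓ0 : ∀ x, 0 ≤ ℓ x)
    (hinfℓ : ⨅ x, ℓ x = 0)
    (u : X → ℝ≥0∞) (hinfu : ⨅ x, u x = 0) :
    ∀ x, (⨅ n : ℕ, (TopE lam ℓ)^[n] u x) =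
      ⨆ (v : X → ℝ≥0∞) (_ : (⨅ y, v y = 0) ∧
          (∀ y, ENNReal.ofReal lam * v y + gslopeN v y ≤ ENNReal.ofReal (ℓ y)) ∧
          ∀ y, v y ≤ u y),
        v x :=
  iInf_iterates_eq_sup_subsolutions_general lam ℓ u hinfu
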